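/- arXiv:2311.17284 — 2 statements merged into one kernel-verified Lean document; each statement's English description precedes it below -/
import Mathlib

section
/- (Edges used by optimal fluxes are geodesic) Let (𝒳,ℰ) be a ℤ^d-periodic graph, α : ℰ^Q → (0,∞), α^ε the symmetrised rescaled weights on ℰ_ε, and d_ε(x,y) := inf{Σ_{(u,v)∈ℰ_ε} α^ε_{uv} |J(u,v)| : J ∈ ℝ_a^{ℰ_ε}, div J = δ_x − δ_y}. Let m₀, m₁ be nonnegative functions on 𝒳_ε of equal total mass and let J̄ ∈ ℝ_a^{ℰ_ε} be a minimiser of Σ_{(u,v)∈ℰ_ε} α^ε_{uv}|J(u,v)| subject to div J = m₀ − m₁. Then for every edge (x,y) ∈ ℰ_ε with J̄(x,y) > 0 one has d_ε(x,y) = 2 α^ε_{xy}. -/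
open scoped BigOperators ENNReal
open MeasureTheory Filter Set Topology

noncomputable section

namespace PeriodicTransport

/-! ### An `EReal`-valued integral -/

open Classical in
/-- The positive part of an extended real, as an element of `ℝ≥0∞`. -/
def toENN (x : EReal) : ℝ≥0∞ := if x = ⊤ then ⊤ else ENNReal.ofReal x.toReal

/-- Integral of an `EReal`-valued function: positive part minus negative part. -/
def eintegral {α : Type*} [MeasurableSpace α] (μ : Measure α) (f : α → EReal) : EReal :=
  ((∫⁻ a, toENN (f a) ∂μ : ℝ≥0∞) : EReal) - ((∫⁻ a, toENN (-(f a)) ∂μ : ℝ≥0∞) : EReal)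

/-! ### ℤ^d-periodic graphs -/

/-- Vertices of the periodic graph: `𝒳 = ℤ^d × V`. -/
abbrev Vert (d : ℕ) (V : Type) : Type := (Fin d → ℤ) × V

/-- A ℤ^d-periodic, connected, locally finite graph with vertex set `ℤ^d × V`. -/
structure PeriodicGraph (d : ℕ) (V : Type) : Type where
  E : Set (Vert d V × Vert d V)
  symm : ∀ x y : Vert d V, (x, y) ∈ E → (y, x) ∈ E
  periodic : ∀ (z : Fin d → ℤ) (x y : Vert d V), (x, y) ∈ E →
      ((x.1 + z, x.2), (y.1 + z, y.2)) ∈ E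
  locFin : ∀ x : Vert d V, {y : Vert d V | (x, y) ∈ E}.Finite
  conn : ∀ x y : Vert d V, Relation.ReflTransGen (fun a b : Vert d V => (a, b) ∈ E) x y

variable {d : ℕ} {V : Type}

/-- Antisymmetry of a discrete vector field. -/
def IsAntisym {W : Type*} (J : W × W → ℝ) : Prop := ∀ a b : W, J (a, b) = - J (b, a)

/-- A discrete vector field supported on the edge set `S`. -/
def SuppOn {W : Type*} (S : Set (W × W)) (J : W × W → ℝ) : Prop := ∀ e, e ∉ S → J e = 0

/-- Discrete divergence: `div J (x) = ∑_{y ∼ x} J (x,y)`. -/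
def divOn {W : Type*} (S : Set (W × W)) (J : W × W → ℝ) (x : W) : ℝ :=
  ∑' y : {y : W // (x, y) ∈ S}, J (x, y.1)

/-- ℤ^d-periodicity of a function on vertices. -/
def PerV (m : Vert d V → ℝ) : Prop :=
  ∀ (z : Fin d → ℤ) (x : Vert d V), m (x.1 + z, x.2) = m x

/-- ℤ^d-periodicity of a function on pairs of vertices. -/
def PerE (J : Vert d V × Vert d V → ℝ) : Prop :=
  ∀ (z : Fin d → ℤ) (x y : Vert d V), J ((x.1 + z, x.2), (y.1 + z, y.2)) = J (x, y)

/-- The edges `ℰ^Q` whose first vertex lies in the base cell. -/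
def EQ (G : PeriodicGraph d V) : Set (Vert d V × Vert d V) :=
  {e | e ∈ G.E ∧ e.1.1 = 0}

/-- The effective flux `Eff(J) = (1/2) ∑_{(x,y) ∈ ℰ^Q} J(x,y) (y_z - x_z)`. -/
def Eff (G : PeriodicGraph d V) (J : Vert d V × Vert d V → ℝ) : Fin d → ℝ :=
  fun i => (1 / 2) * ∑' e : EQ G, J e.1 * (((e.1.2.1 i : ℤ) : ℝ) - ((e.1.1.1 i : ℤ) : ℝ))

/-- Vertices at `|x_z|_∞ ≤ R`. -/
def ballV (d : ℕ) (V : Type) (R : ℝ) : Set (Vert d V) := {x | ∀ i, |((x.1 i : ℤ) : ℝ)| ≤ R}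

/-- Edges with `|x_z|_∞ ≤ R`. -/
def ballE (G : PeriodicGraph d V) (R : ℝ) : Set (Vert d V × Vert d V) :=
  {e | e ∈ G.E ∧ ∀ i, |((e.1.1 i : ℤ) : ℝ)| ≤ R}

/-- Convexity of a cost function with values in `ℝ ∪ {+∞}`. -/
def ConvexF (F : (Vert d V → ℝ) → (Vert d V × Vert d V → ℝ) → EReal) : Prop :=
  ∀ (m₁ m₂ : Vert d V → ℝ) (J₁ J₂ : Vert d V × Vert d V → ℝ) (a b : ℝ),
    0 ≤ a → 0 ≤ b → a + b = 1 →
      F (a • m₁ + b • m₂) (a • J₁ + b • J₂) ≤ (a : EReal) * F m₁ J₁ + (b : EReal) * F m₂ J₂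

/-- Locality of the cost function with radius `R₁`. -/
def LocalF (F : (Vert d V → ℝ) → (Vert d V × Vert d V → ℝ) → EReal) (R₁ : ℝ) : Prop :=
  ∀ (m m' : Vert d V → ℝ) (J J' : Vert d V × Vert d V → ℝ),
    (∀ x : Vert d V, (∀ i, |((x.1 i : ℤ) : ℝ)| ≤ R₁) → m x = m' x) →
    (∀ e : Vert d V × Vert d V,
      (∀ i, |((e.1.1 i : ℤ) : ℝ)| ≤ R₁) → (∀ i, |((e.2.1 i : ℤ) : ℝ)| ≤ R₁) → J e = J' e) →
    F m J = F m' J'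

/-- Admissibility of a discrete cost function (Assumption 2.5 of the paper). -/
structure Admissible (G : PeriodicGraph d V)
    (F : (Vert d V → ℝ) → (Vert d V × Vert d V → ℝ) → EReal)
    (R₀ R₁ : ℤ) (c C : ℝ) : Prop where
  edge_bound : ∀ e ∈ G.E, ∀ i, |e.1.1 i - e.2.1 i| ≤ R₀
  ne_bot : ∀ m J, F m J ≠ ⊥
  convex : ConvexF F
  lsc : LowerSemicontinuous
    (fun p : (Vert d V → ℝ) × (Vert d V × Vert d V → ℝ) => F p.1 p.2)
  loc : LocalF F (R₁ : ℝ)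
  c_pos : 0 < c
  growth : ∀ m J, (∀ x, 0 ≤ m x) → IsAntisym J → SuppOn G.E J →
    ((c * (∑' e : EQ G, |J e.1|)
        - C * (1 + ∑' x : ballV d V ((max R₀ R₁ : ℤ) : ℝ), m x.1) : ℝ) : EReal) ≤ F m J
  interior_pt : ∃ (m₀ : Vert d V → ℝ) (J₀ : Vert d V × Vert d V → ℝ),
    (∀ x, 0 ≤ m₀ x) ∧ PerV m₀ ∧ IsAntisym J₀ ∧ PerE J₀ ∧ SuppOn G.E J₀ ∧
    (∀ x, divOn G.E J₀ x = 0) ∧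
    (m₀, J₀) ∈ interior {p : (Vert d V → ℝ) × (Vert d V × Vert d V → ℝ) | F p.1 p.2 ≠ ⊤}

/-! ### The cell formula -/

/-- Representatives `Rep(ρ, j)`. -/
def Rep [Fintype V] (G : PeriodicGraph d V) (ρ : ℝ) (j : Fin d → ℝ) :
    Set ((Vert d V → ℝ) × (Vert d V × Vert d V → ℝ)) :=
  {p | (∀ x, 0 ≤ p.1 x) ∧ PerV p.1 ∧ IsAntisym p.2 ∧ PerE p.2 ∧ SuppOn G.E p.2 ∧
    (∑ v : V, p.1 (0, v)) = ρ ∧ (∀ x, divOn G.E p.2 x = 0) ∧ Eff G p.2 = j}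

/-- The homogenised energy density `f_hom`, given by the cell formula. -/
def fhom [Fintype V] (G : PeriodicGraph d V)
    (F : (Vert d V → ℝ) → (Vert d V × Vert d V → ℝ) → EReal)
    (ρ : ℝ) (j : Fin d → ℝ) : EReal :=
  sInf {A | ∃ p ∈ Rep G ρ j, A = F p.1 p.2}

/-- Representatives consisting of a flux only (flow-based setting). -/
def RepJ (G : PeriodicGraph d V) (j : Fin d → ℝ) : Set (Vert d V × Vert d V → ℝ) :=
  {J | IsAntisym J ∧ PerE J ∧ SuppOn G.E J ∧ (∀ x, divOn G.E J x = 0) ∧ Eff G J = j}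

/-- The homogenised density for the edge-weighted `W₁`-type cost
`F(J) = ∑_{(x,y) ∈ ℰ^Q} α_{xy} |J(x,y)|`. -/
def fhomJ (G : PeriodicGraph d V) (α : Vert d V × Vert d V → ℝ) (j : Fin d → ℝ) : EReal :=
  sInf {A | ∃ J ∈ RepJ G j, A = ((∑' e : EQ G, α e.1 * |J e.1| : ℝ) : EReal)}

/-! ### The rescaled graph -/

/-- Vertices of the rescaled graph `𝒳_ε`, `ε = 1/N`. -/
abbrev VertE (d : ℕ) (V : Type) (N : ℕ) : Type := (Fin d → ZMod N) × V

/-- The projection `T_ε^0` of the periodic graph onto the rescaled graph. -/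
def Tmap (N : ℕ) : Vert d V → VertE d V N :=
  fun x => (fun i => ((x.1 i : ℤ) : ZMod N), x.2)

/-- Edges of the rescaled graph. -/
def Eeps (G : PeriodicGraph d V) (N : ℕ) : Set (VertE d V N × VertE d V N) :=
  (fun e : Vert d V × Vert d V => (Tmap N e.1, Tmap N e.2)) '' G.E

/-- The lift `τ_ε^z` of a function on the rescaled vertices to a periodic function. -/
def tauV (N : ℕ) (z : Fin d → ZMod N) (ψ : VertE d V N → ℝ) : Vert d V → ℝ :=
  fun x => ψ (fun i => z i + ((x.1 i : ℤ) : ZMod N), x.2)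

/-- The lift `τ_ε^z` of a function on rescaled pairs of vertices. -/
def tauE (N : ℕ) (z : Fin d → ZMod N) (ψ : VertE d V N × VertE d V N → ℝ) :
    Vert d V × Vert d V → ℝ :=
  fun e => ψ ((fun i => z i + ((e.1.1 i : ℤ) : ZMod N), e.1.2),
              (fun i => z i + ((e.2.1 i : ℤ) : ZMod N), e.2.2))

/-- The rescaled energy `F_ε`. -/
def Feps [Fintype V] (N : ℕ) [NeZero N]
    (F : (Vert d V → ℝ) → (Vert d V × Vert d V → ℝ) → EReal)
    (m : VertE d V N → ℝ) (J : VertE d V N × VertE d V N → ℝ) : EReal :=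
  ∑ z : Fin d → ZMod N,
    (((((N : ℝ) ^ d)⁻¹ : ℝ)) : EReal) *
      F (fun x => (N : ℝ) ^ d * tauV N z m x) (fun e => (N : ℝ) ^ (d - 1) * tauE N z J e)

/-- Compactly supported C¹ test functions on the time interval `(0,1)`. -/
def TestT (φ : ℝ → ℝ) : Prop :=
  ContDiff ℝ 1 φ ∧ ∃ a b : ℝ, 0 < a ∧ b < 1 ∧ ∀ t, t ∉ Icc a b → φ t = 0

/-- The discrete continuity equation `(m, J) ∈ CE_ε`. -/
structure DCE (G : PeriodicGraph d V) (N : ℕ)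
    (m : ℝ → VertE d V N → ℝ) (J : ℝ → VertE d V N × VertE d V N → ℝ) : Prop where
  cont : ∀ x, ContinuousOn (fun t => m t x) (Ioo 0 1)
  nonneg : ∀ t ∈ Ioo (0 : ℝ) 1, ∀ x, 0 ≤ m t x
  antisym : ∀ t ∈ Ioo (0 : ℝ) 1, IsAntisym (J t)
  supp : ∀ t ∈ Ioo (0 : ℝ) 1, SuppOn (Eeps G N) (J t)
  meas : ∀ e, Measurable fun t => J t e
  ce : ∀ (x : VertE d V N) (φ : ℝ → ℝ), TestT φ →
    ∫ t in Ioo (0 : ℝ) 1, deriv φ t * m t x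
      = ∫ t in Ioo (0 : ℝ) 1, φ t * divOn (Eeps G N) (J t) x

/-- Boundary values of a curve of discrete measures. -/
def Bdry (N : ℕ) (m : ℝ → VertE d V N → ℝ) (m₀ m₁ : VertE d V N → ℝ) : Prop :=
  (∀ x, Tendsto (fun t => m t x) (nhdsWithin 0 (Ioo 0 1)) (nhds (m₀ x))) ∧
  (∀ x, Tendsto (fun t => m t x) (nhdsWithin 1 (Ioo 0 1)) (nhds (m₁ x)))

/-- The discrete action functional `A_ε`. -/
def Aeps [Fintype V] (N : ℕ) [NeZero N]
    (F : (Vert d V → ℝ) → (Vert d V × Vert d V → ℝ) → EReal)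
    (m : ℝ → VertE d V N → ℝ) (J : ℝ → VertE d V N × VertE d V N → ℝ) : EReal :=
  eintegral (volume.restrict (Ioo (0 : ℝ) 1)) (fun t => Feps N F (m t) (J t))

/-- The discrete boundary value problem `MA_ε`. -/
def MAeps [Fintype V] (G : PeriodicGraph d V) (N : ℕ) [NeZero N]
    (F : (Vert d V → ℝ) → (Vert d V × Vert d V → ℝ) → EReal)
    (m₀ m₁ : VertE d V N → ℝ) : EReal :=
  sInf {A | ∃ m J, DCE G N m J ∧ Bdry N m m₀ m₁ ∧ A = Aeps N F m J}

/-! ### Embedding of discrete measures and weak convergence -/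

/-- The cube `Q_ε^z ⊆ 𝕋^d` of side `ε = 1/N` based at `εz`. -/
def cubeQ (d N : ℕ) (z : Fin d → ZMod N) : Set (Fin d → ℝ) :=
  {y | ∀ i, ((z i).val : ℝ) / N ≤ y i ∧ y i < (((z i).val : ℝ) + 1) / N}

/-- The integral of a function against the embedded measure `ι_ε m`. -/
def iotaInt [Fintype V] (N : ℕ) [NeZero N] (m : VertE d V N → ℝ)
    (g : (Fin d → ℝ) → ℝ) : ℝ :=
  ∑ x : VertE d V N, m x * ((N : ℝ) ^ d * ∫ y in cubeQ d N x.1, g y)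

/-- ℤ^d-periodicity of a function on `ℝ^d`. -/
def ZPer {d : ℕ} (g : (Fin d → ℝ) → ℝ) : Prop :=
  ∀ (z : Fin d → ℤ) (x : Fin d → ℝ), g (fun i => x i + (z i : ℝ)) = g x

/-! ### Continuum objects on the torus (realised as the periodic cube) -/

/-- The fundamental domain `[0,1)^d` of the torus. -/
def unitCube (d : ℕ) : Set (Fin d → ℝ) := {x | ∀ i, 0 ≤ x i ∧ x i < 1}

/-- Time-space `ℝ × ℝ^d`. -/
abbrev Spc (d : ℕ) : Type := ℝ × (Fin d → ℝ)

/-- The fundamental domain `(0,1) × [0,1)^d` of `(0,1) × 𝕋^d`. -/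
def timeCube (d : ℕ) : Set (Spc d) := {p | p.1 ∈ Ioo (0 : ℝ) 1 ∧ p.2 ∈ unitCube d}

/-- Lebesgue measure `L^{d+1}` on `(0,1) × 𝕋^d`. -/
def Leb (d : ℕ) : Measure (Spc d) := volume.restrict (timeCube d)

/-- Lebesgue measure `L^d` on `𝕋^d`. -/
def LebS (d : ℕ) : Measure (Fin d → ℝ) := volume.restrict (unitCube d)

/-- Spatial ℤ^d-periodicity of a function on time-space. -/
def ZPerT {d : ℕ} (φ : Spc d → ℝ) : Prop :=
  ∀ (z : Fin d → ℤ) (p : Spc d), φ (p.1, fun i => p.2 i + (z i : ℝ)) = φ p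

/-- C¹ spatially periodic test functions on `[0,1] × 𝕋^d` (no condition at `t = 0,1`). -/
def IsTestB (d : ℕ) (φ : Spc d → ℝ) : Prop := ContDiff ℝ 1 φ ∧ ZPerT φ

/-- A candidate for the continuity equation on `(0,1) × 𝕋^d`: a pair `(μ, ν)`
encoded through a joint Lebesgue decomposition `μ = ρ L^{d+1} + ρ^⊥ σ`,
`ν = j L^{d+1} + j^⊥ σ` with `σ ⊥ L^{d+1}`. -/
structure ContCE (d : ℕ) where
  σ : Measure (Spc d)
  σ_fin : σ Set.univ ≠ ⊤
  σ_sing : σ ⟂ₘ Leb d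
  σ_supp : σ (timeCube d)ᶜ = 0
  ρ : Spc d → ℝ
  ρp : Spc d → ℝ
  j : Spc d → Fin d → ℝ
  jp : Spc d → Fin d → ℝ
  ρ_nn : ∀ p, 0 ≤ ρ p
  ρp_nn : ∀ p, 0 ≤ ρp p
  ρ_meas : Measurable ρ
  ρp_meas : Measurable ρp
  j_meas : Measurable j
  jp_meas : Measurable jp
  ρ_int : Integrable ρ (Leb d)
  ρp_int : Integrable ρp σ
  j_int : Integrable j (Leb d)
  jp_int : Integrable jp σ

/-- The continuity equation on `(0,1) × 𝕋^d` with boundary data `μ₀, μ₁`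
(weak formulation with test functions not vanishing at `t = 0, 1`). -/
def solvesCEbd (d : ℕ) (s : ContCE d) (μ₀ μ₁ : Measure (Fin d → ℝ)) : Prop :=
  ∀ φ : Spc d → ℝ, IsTestB d φ →
    ((∫ p, fderiv ℝ φ p ((1 : ℝ), (0 : Fin d → ℝ)) * s.ρ p ∂(Leb d))
      + (∫ p, fderiv ℝ φ p ((1 : ℝ), (0 : Fin d → ℝ)) * s.ρp p ∂s.σ))
    + (∑ i : Fin d,
        ((∫ p, fderiv ℝ φ p ((0 : ℝ), Pi.single i (1 : ℝ)) * s.j p i ∂(Leb d))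
          + (∫ p, fderiv ℝ φ p ((0 : ℝ), Pi.single i (1 : ℝ)) * s.jp p i ∂s.σ)))
    = (∫ y, φ (1, y) ∂μ₁) - (∫ y, φ (0, y) ∂μ₀)

/-- The continuum action functional `𝔸`, for an energy density `f` with recession
function `frec`. -/
def action (d : ℕ) (f frec : ℝ → (Fin d → ℝ) → EReal) (s : ContCE d) : EReal :=
  eintegral (Leb d) (fun p => f (s.ρ p) (s.j p))
    + eintegral s.σ (fun p => frec (s.ρp p) (s.jp p))

/-- The continuum boundary value problem `MA(μ₀, μ₁)`. -/
def MAc (d : ℕ) (f frec : ℝ → (Fin d → ℝ) → EReal) (μ₀ μ₁ : Measure (Fin d → ℝ)) : EReal :=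
  sInf {A | ∃ s : ContCE d, solvesCEbd d s μ₀ μ₁ ∧ A = action d f frec s}

/-! ### Weighted `W₁`-distance on the rescaled graph -/

/-- Edge-weighted total variation cost of a discrete vector field. -/
def edgeCost {W : Type*} (S : Set (W × W)) (αw : W × W → ℝ) (J : W × W → ℝ) : ℝ :=
  ∑' e : S, αw e.1 * |J e.1|

/-- The weighted graph distance defined by minimal-flux problems. -/
def dEps {W : Type*} [DecidableEq W] (S : Set (W × W)) (αw : W × W → ℝ) (x y : W) : EReal :=
  sInf {A | ∃ J : W × W → ℝ, IsAntisym J ∧ SuppOn S J ∧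
    (∀ w, divOn S J w = (if w = x then (1 : ℝ) else 0) - (if w = y then 1 else 0)) ∧
    A = ((edgeCost S αw J : ℝ) : EReal)}

/-! ### Embedded flux and total variation -/

/-- Membership in the (periodised) cube of side `1/N` based at `c`. -/
def kerQ (d N : ℕ) (c : Fin d → ℝ) (ξ : Fin d → ℝ) : Prop :=
  ∃ w : Fin d → ℤ, ∀ i, c i ≤ ξ i + (w i : ℝ) ∧ ξ i + (w i : ℝ) < c i + 1 / N

/-- The density (w.r.t. Lebesgue measure on the torus) of the embedded flux `ι_ε J`. -/
def iotaJden [Fintype V] (G : PeriodicGraph d V) (N : ℕ) [NeZero N]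
    (J : VertE d V N × VertE d V N → ℝ) (ξ : Fin d → ℝ) (i : Fin d) : ℝ :=
  (N : ℝ) ^ (d - 1) * ∑ z : Fin d → ZMod N, ∑' e : EQ G,
    (tauE N z J e.1 / 2) * (((e.1.2.1 i : ℤ) : ℝ) - ((e.1.1.1 i : ℤ) : ℝ)) *
      (∫ s in Ioo (0 : ℝ) 1,
        Set.indicator {s' : ℝ |
            kerQ d N (fun i' => (((z i').val : ℝ) + s' * ((e.1.2.1 i' : ℤ) : ℝ)) / N) ξ}
          (fun _ => (1 : ℝ)) s)

/-- The total variation norm `‖ι_ε J‖_{TV(𝕋^d)}` of the embedded flux. -/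
def iotaJTV [Fintype V] (G : PeriodicGraph d V) (N : ℕ) [NeZero N]
    (J : VertE d V N × VertE d V N → ℝ) : ℝ :=
  ∫ ξ in unitCube d, Real.sqrt (∑ i, (iotaJden G N J ξ i) ^ 2)

/-! ### One-dimensional embedded graphs -/

/-- Position of a vertex of an embedded one-dimensional periodic graph. -/
def pos {k : ℕ} (xs : Fin k → ℝ) (v : Vert 1 (Fin k)) : ℝ := ((v.1 0 : ℤ) : ℝ) + xs v.2

end PeriodicTransport

open PeriodicTransport MeasureTheory Filter Set

private lemma tsum_ite_subtype' {W : Type*} [DecidableEq W] {P : W → Prop} (c : W) (hc : P c)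
    (v : ℝ) : (∑' w : {w // P w}, (if (w : W) = c then v else 0)) = v := by
  rw [tsum_eq_single (⟨c, hc⟩ : {w // P w})]
  · simp
  · intro b hb
    have hbc : (b : W) ≠ c := fun h => hb (Subtype.ext h)
    simp [hbc]

private lemma divOn_add_mul' {W : Type*} [Finite W] (S : Set (W × W)) (A B : W × W → ℝ)
    (c : ℝ) (w : W) :
    divOn S (fun f => A f + c * B f) w = divOn S A w + c * divOn S B w := by
  simp only [divOn]
  rw [Summable.tsum_add Summable.of_finite Summable.of_finite, tsum_mul_left]

private lemma divOn_sub' {W : Type*} [Finite W] (S : Set (W × W)) (A B : W × W → ℝ) (w : W) :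
    divOn S (fun f => A f - B f) w = divOn S A w - divOn S B w := by
  simp only [divOn]
  rw [Summable.tsum_sub Summable.of_finite Summable.of_finite]

/-- **Edges used by optimal fluxes are geodesic** (equation (4.5) of the paper).
If `J̄` is an optimal flux for the discrete minimal-flux transport problem between
`m₀` and `m₁` on the rescaled graph, then every edge with `J̄(x,y) > 0` realises the
graph distance: `d_ε(x,y) = 2 α^ε_{xy}`. -/
theorem optimal_flux_edges_geodesic
    (d : ℕ) (V : Type) [Fintype V] [DecidableEq V]
    (G : PeriodicGraph d V) (N : ℕ) [NeZero N]
    (R₀ : ℤ) (hR₀ : ∀ e ∈ G.E, ∀ i, |e.1.1 i - e.2.1 i| ≤ R₀) (hN : 2 * R₀ < (N : ℤ))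
    (α : Vert d V × Vert d V → ℝ) (hα : ∀ e ∈ EQ G, 0 < α e)
    (αt : VertE d V N × VertE d V N → ℝ)
    (hαt : ∀ z : Fin d → ZMod N, ∀ e ∈ EQ G, tauE N z αt e = α e / N)
    (αe : VertE d V N × VertE d V N → ℝ)
    (hαe : ∀ a b : VertE d V N, αe (a, b) = (αt (a, b) + αt (b, a)) / 2)
    (m₀ m₁ : VertE d V N → ℝ)
    (h₀ : ∀ x, 0 ≤ m₀ x) (h₁ : ∀ x, 0 ≤ m₁ x)
    (hmass : ∑ x : VertE d V N, m₀ x = ∑ x : VertE d V N, m₁ x)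
    (Jb : VertE d V N × VertE d V N → ℝ)
    (hJbA : IsAntisym Jb) (hJbS : SuppOn (Eeps G N) Jb)
    (hJbdiv : ∀ w, divOn (Eeps G N) Jb w = m₀ w - m₁ w)
    (hmin : ∀ J : VertE d V N × VertE d V N → ℝ, IsAntisym J → SuppOn (Eeps G N) J →
      (∀ w, divOn (Eeps G N) J w = m₀ w - m₁ w) →
      edgeCost (Eeps G N) αe Jb ≤ edgeCost (Eeps G N) αe J) :
    ∀ e ∈ Eeps G N, 0 < Jb e → dEps (Eeps G N) αe e.1 e.2 = ((2 * αe e : ℝ) : EReal) := by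
  classical
  rintro ⟨x, y⟩ he hpos
  set S := Eeps G N with hSdef
  -- symmetry of the rescaled edge set
  have hSsymm : ∀ a b : VertE d V N, (a, b) ∈ S → (b, a) ∈ S := by
    rintro a b ⟨⟨p, q⟩, hpq, heq⟩
    refine ⟨(q, p), G.symm p q hpq, ?_⟩
    simp only [Prod.mk.injEq] at heq ⊢
    exact ⟨heq.2, heq.1⟩
  have hNpos : (0 : ℝ) < N := by exact_mod_cast Nat.pos_of_ne_zero (NeZero.ne N)
  -- positivity of the weights on rescaled edges
  have hαtpos : ∀ a b : VertE d V N, (a, b) ∈ S → 0 < αt (a, b) := by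
    rintro a b ⟨⟨p, q⟩, hpq, heq⟩
    have h2 := G.periodic (-p.1) p q hpq
    have e1 : p.1 + -p.1 = 0 := by simp
    have e2 : q.1 + -p.1 = fun i => q.1 i - p.1 i := by funext i; simp [sub_eq_add_neg]
    rw [e1, e2] at h2
    have hEQ : ((((0 : Fin d → ℤ), p.2), ((fun i => q.1 i - p.1 i), q.2)) :
        Vert d V × Vert d V) ∈ EQ G := ⟨h2, rfl⟩
    have key := hαt (fun i => ((p.1 i : ℤ) : ZMod N)) _ hEQ
    have harg : (((fun i => ((p.1 i : ℤ) : ZMod N) + ((((0 : Fin d → ℤ)) i : ℤ) : ZMod N), p.2),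
          (fun i => ((p.1 i : ℤ) : ZMod N) + (((fun i' => q.1 i' - p.1 i') i : ℤ) : ZMod N), q.2)) :
          VertE d V N × VertE d V N)
        = (Tmap N p, Tmap N q) := by
      have c1 : (fun i => ((p.1 i : ℤ) : ZMod N) + ((((0 : Fin d → ℤ)) i : ℤ) : ZMod N))
          = fun i => ((p.1 i : ℤ) : ZMod N) := by funext i; simp
      have c2 : (fun i => ((p.1 i : ℤ) : ZMod N) + (((fun i' => q.1 i' - p.1 i') i : ℤ) : ZMod N))
          = fun i => ((q.1 i : ℤ) : ZMod N) := by funext i; push_cast; ring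
      simp only [Tmap]
      rw [c1, c2]
    have key2 : αt (Tmap N p, Tmap N q) = α ((((0 : Fin d → ℤ), p.2),
        ((fun i => q.1 i - p.1 i), q.2)) : Vert d V × Vert d V) / N := by
      rw [← harg]; exact key
    rw [← heq]
    have : (fun e : Vert d V × Vert d V => (Tmap N e.1, Tmap N e.2)) (p, q)
        = (Tmap N p, Tmap N q) := rfl
    rw [this]
    rw [key2]
    exact div_pos (hα _ hEQ) hNpos
  have hαe_symm : ∀ a b : VertE d V N, αe (a, b) = αe (b, a) := by
    intro a b; rw [hαe, hαe]; ring
  have hαe_pos : ∀ a b : VertE d V N, (a, b) ∈ S → 0 < αe (a, b) := by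
    intro a b hab
    rw [hαe]
    have h1 := hαtpos a b hab
    have h2 := hαtpos b a (hSsymm a b hab)
    linarith
  have hxy : x ≠ y := by
    rintro rfl
    have h := hJbA x x
    linarith
  have hpairne : ((x, y) : VertE d V N × VertE d V N) ≠ (y, x) :=
    fun h => hxy (congrArg Prod.fst h)
  -- the unit dipole flux on the edge (x,y)
  set J0 : VertE d V N × VertE d V N → ℝ :=
    fun p => (if p = (x, y) then (1 : ℝ) else 0) - (if p = (y, x) then 1 else 0) with hJ0def
  have hJ0xy : J0 (x, y) = 1 := by simp [hJ0def, hpairne]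
  have hJ0yx : J0 (y, x) = -1 := by simp [hJ0def, Ne.symm hpairne]
  have hJ0A : IsAntisym J0 := by
    intro a b
    have h1 : ((b, a) = ((y, x) : VertE d V N × VertE d V N)) ↔ (a, b) = (x, y) := by
      simp only [Prod.mk.injEq]; exact and_comm
    have h2 : ((b, a) = ((x, y) : VertE d V N × VertE d V N)) ↔ (a, b) = (y, x) := by
      simp only [Prod.mk.injEq]; exact and_comm
    simp only [hJ0def]
    rw [if_congr h2 rfl rfl, if_congr h1 rfl rfl]
    ring
  have hJ0S : SuppOn S J0 := by
    intro f hf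
    have h1 : f ≠ (x, y) := fun h => hf (by rw [h]; exact he)
    have h2 : f ≠ (y, x) := fun h => hf (by rw [h]; exact hSsymm x y he)
    simp [hJ0def, h1, h2]
  have hJ0div : ∀ w, divOn S J0 w = (if w = x then (1 : ℝ) else 0) - (if w = y then 1 else 0) := by
    intro w
    by_cases hwx : w = x
    · rw [hwx, if_pos rfl, if_neg hxy]
      have hterm : ∀ y' : {y' : VertE d V N // (x, y') ∈ S},
          J0 (x, y'.1) = (if (y'.1 : VertE d V N) = y then (1 : ℝ) else 0) := by
        intro y'
        have h2 : ((x, y'.1) : VertE d V N × VertE d V N) ≠ (y, x) :=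
          fun h => hxy (congrArg Prod.fst h)
        have h1 : ((x, y'.1) = ((x, y) : VertE d V N × VertE d V N)) ↔ y'.1 = y := by
          simp [Prod.mk.injEq]
        simp only [hJ0def]
        rw [if_neg h2, if_congr h1 rfl rfl]
        ring
      show (∑' y' : {y' : VertE d V N // (x, y') ∈ S}, J0 (x, y'.1)) = 1 - 0
      rw [tsum_congr hterm, tsum_ite_subtype' y he 1]
      norm_num
    · by_cases hwy : w = y
      · rw [hwy, if_neg (fun h => hxy h.symm), if_pos rfl]
        have hterm : ∀ y' : {y' : VertE d V N // (y, y') ∈ S},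
            J0 (y, y'.1) = -(if (y'.1 : VertE d V N) = x then (1 : ℝ) else 0) := by
          intro y'
          have h1 : ((y, y'.1) : VertE d V N × VertE d V N) ≠ (x, y) :=
            fun h => hxy (congrArg Prod.fst h).symm
          have h2 : ((y, y'.1) = ((y, x) : VertE d V N × VertE d V N)) ↔ y'.1 = x := by
            simp [Prod.mk.injEq]
          simp only [hJ0def]
          rw [if_neg h1, if_congr h2 rfl rfl]
          ring
        show (∑' y' : {y' : VertE d V N // (y, y') ∈ S}, J0 (y, y'.1)) = 0 - 1
        rw [tsum_congr hterm, tsum_neg, tsum_ite_subtype' x (hSsymm x y he) 1]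
        norm_num
      · rw [if_neg hwx, if_neg hwy]
        have hterm : ∀ y' : {y' : VertE d V N // (w, y') ∈ S}, J0 (w, y'.1) = 0 := by
          intro y'
          have h1 : ((w, y'.1) : VertE d V N × VertE d V N) ≠ (x, y) :=
            fun h => hwx (congrArg Prod.fst h)
          have h2 : ((w, y'.1) : VertE d V N × VertE d V N) ≠ (y, x) :=
            fun h => hwy (congrArg Prod.fst h)
          simp [hJ0def, h1, h2]
        show (∑' y' : {y' : VertE d V N // (w, y') ∈ S}, J0 (w, y'.1)) = 0 - 0
        rw [tsum_congr hterm]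
        simp
  -- cost of the dipole
  have hcost0 : edgeCost S αe J0 = 2 * αe (x, y) := by
    have hterm : ∀ f : {e // e ∈ S},
        αe f.1 * |J0 f.1|
          = (if f.1 = ((x, y) : VertE d V N × VertE d V N) then αe (x, y) else 0)
            + (if f.1 = ((y, x) : VertE d V N × VertE d V N) then αe (y, x) else 0) := by
      rintro ⟨⟨p, q⟩, hf⟩
      dsimp only
      by_cases h1 : ((p, q) : VertE d V N × VertE d V N) = (x, y)
      · injection h1 with hp hq; subst hp; subst hq
        rw [if_pos rfl, if_neg hpairne, hJ0xy]
        simp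
      · by_cases h2 : ((p, q) : VertE d V N × VertE d V N) = (y, x)
        · injection h2 with hp hq; subst hp; subst hq
          rw [if_neg (Ne.symm hpairne), if_pos rfl, hJ0yx]
          simp
        · have h0 : J0 (p, q) = 0 := by simp [hJ0def, h1, h2]
          rw [if_neg h1, if_neg h2, h0]
          simp
    have hsplit : (∑' f : {e // e ∈ S}, αe f.1 * |J0 f.1|)
        = (∑' f : {e // e ∈ S},
            (if f.1 = ((x, y) : VertE d V N × VertE d V N) then αe (x, y) else 0))
          + (∑' f : {e // e ∈ S},
            (if f.1 = ((y, x) : VertE d V N × VertE d V N) then αe (y, x) else 0)) := by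
      rw [tsum_congr hterm]
      exact Summable.tsum_add Summable.of_finite Summable.of_finite
    show (∑' f : {e // e ∈ S}, αe f.1 * |J0 f.1|) = 2 * αe (x, y)
    rw [hsplit, tsum_ite_subtype' (x, y) he (αe (x, y)),
      tsum_ite_subtype' (y, x) (hSsymm x y he) (αe (y, x)), ← hαe_symm x y]
    ring
  -- lower bound via the optimality of Jb
  have hlow : ∀ J : VertE d V N × VertE d V N → ℝ, IsAntisym J → SuppOn S J →
      (∀ w, divOn S J w = (if w = x then (1 : ℝ) else 0) - (if w = y then 1 else 0)) →
      2 * αe (x, y) ≤ edgeCost S αe J := by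
    intro J hJA hJS hJd
    have hD : (0 : ℝ) < 1 + |J (x, y)| + |J (y, x)| := by positivity
    set δ : ℝ := Jb (x, y) / (1 + |J (x, y)| + |J (y, x)|) with hδdef
    have hδ : 0 < δ := div_pos hpos hD
    have hδD : δ * (1 + |J (x, y)| + |J (y, x)|) = Jb (x, y) := by
      rw [hδdef]; field_simp
    have hδ1 : δ * (1 + |J (x, y)|) ≤ Jb (x, y) := by
      nlinarith [abs_nonneg (J (y, x)), hδ.le]
    have hδ2 : δ * (1 + |J (y, x)|) ≤ Jb (x, y) := by
      nlinarith [abs_nonneg (J (x, y)), hδ.le]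
    set Jb' : VertE d V N × VertE d V N → ℝ := fun f => Jb f + δ * (J f - J0 f) with hJb'def
    have hA' : IsAntisym Jb' := by
      intro p q; simp only [hJb'def]; rw [hJbA p q, hJA p q, hJ0A p q]; ring
    have hS' : SuppOn S Jb' := by
      intro f hf; simp only [hJb'def]; rw [hJbS f hf, hJS f hf, hJ0S f hf]; ring
    have hd' : ∀ w, divOn S Jb' w = m₀ w - m₁ w := by
      intro w
      have h1 : divOn S Jb' w = divOn S Jb w + δ * divOn S (fun f => J f - J0 f) w := by
        rw [hJb'def]; exact divOn_add_mul' S Jb (fun f => J f - J0 f) δ w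
      have h2 : divOn S (fun f => J f - J0 f) w = divOn S J w - divOn S J0 w :=
        divOn_sub' S J J0 w
      rw [h1, h2, hJd w, hJ0div w, hJbdiv w]; ring
    -- pointwise estimate
    have hpt : ∀ f : {e // e ∈ S},
        αe f.1 * |Jb' f.1| ≤ αe f.1 * |Jb f.1| + δ * (αe f.1 * |J f.1|)
          + ((if f.1 = ((x, y) : VertE d V N × VertE d V N) then -(δ * αe (x, y)) else 0)
            + (if f.1 = ((y, x) : VertE d V N × VertE d V N) then -(δ * αe (x, y)) else 0)) := by
      rintro ⟨⟨p, q⟩, hf⟩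
      dsimp only
      have hα0 : 0 < αe (p, q) := hαe_pos p q hf
      by_cases h1 : ((p, q) : VertE d V N × VertE d V N) = (x, y)
      · have hne2 : ((p, q) : VertE d V N × VertE d V N) ≠ (y, x) := by
          rw [h1]; exact hpairne
        rw [if_pos h1, if_neg hne2, h1]
        have hval : Jb' (x, y) = Jb (x, y) + δ * (J (x, y) - 1) := by
          simp only [hJb'def]; rw [hJ0xy]
        have hnn : 0 ≤ Jb (x, y) + δ * (J (x, y) - 1) := by
          nlinarith [neg_abs_le (J (x, y)), hδ.le]
        rw [hval, abs_of_nonneg hnn, abs_of_pos hpos]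
        have hα0' : 0 < αe (x, y) := hαe_pos x y he
        nlinarith [mul_nonneg (mul_nonneg hδ.le hα0'.le)
          (sub_nonneg.2 (le_abs_self (J (x, y))))]
      · by_cases h2 : ((p, q) : VertE d V N × VertE d V N) = (y, x)
        · rw [if_neg h1, if_pos h2, h2]
          have hval : Jb' (y, x) = -Jb (x, y) + δ * (J (y, x) + 1) := by
            simp only [hJb'def]; rw [hJ0yx, hJbA y x]; ring
          have hnp : -Jb (x, y) + δ * (J (y, x) + 1) ≤ 0 := by
            nlinarith [le_abs_self (J (y, x)), hδ.le]
          have hJbyx : Jb (y, x) = -Jb (x, y) := hJbA y x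
          rw [hval, abs_of_nonpos hnp, hJbyx, abs_neg, abs_of_pos hpos]
          have hα0' : 0 < αe (y, x) := hαe_pos y x (hSsymm x y he)
          have hαs : αe (y, x) = αe (x, y) := (hαe_symm x y).symm
          rw [hαs]
          nlinarith [mul_nonneg (mul_nonneg hδ.le ((hαe_pos x y he)).le)
            (add_nonneg (abs_nonneg (J (y, x))) (le_refl 0)), hαe_pos x y he,
            mul_nonneg (mul_nonneg hδ.le (hαe_pos x y he).le)
              (sub_nonneg.2 (neg_abs_le (J (y, x))))]
        · rw [if_neg h1, if_neg h2]
          have h0 : J0 (p, q) = 0 := by simp [hJ0def, h1, h2]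
          have hval : Jb' (p, q) = Jb (p, q) + δ * J (p, q) := by
            simp only [hJb'def]; rw [h0]; ring
          rw [hval]
          have htri : |Jb (p, q) + δ * J (p, q)| ≤ |Jb (p, q)| + δ * |J (p, q)| := by
            calc |Jb (p, q) + δ * J (p, q)| ≤ |Jb (p, q)| + |δ * J (p, q)| :=
                abs_add_le _ _
              _ = |Jb (p, q)| + δ * |J (p, q)| := by rw [abs_mul, abs_of_pos hδ]
          nlinarith [mul_le_mul_of_nonneg_left htri hα0.le]
    have hsum : edgeCost S αe Jb' ≤ ∑' f : {e // e ∈ S},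
        (αe f.1 * |Jb f.1| + δ * (αe f.1 * |J f.1|)
          + ((if f.1 = ((x, y) : VertE d V N × VertE d V N) then -(δ * αe (x, y)) else 0)
            + (if f.1 = ((y, x) : VertE d V N × VertE d V N) then -(δ * αe (x, y)) else 0))) :=
      Summable.tsum_le_tsum hpt Summable.of_finite Summable.of_finite
    have hsplit : (∑' f : {e // e ∈ S},
        (αe f.1 * |Jb f.1| + δ * (αe f.1 * |J f.1|)
          + ((if f.1 = ((x, y) : VertE d V N × VertE d V N) then -(δ * αe (x, y)) else 0)
            + (if f.1 = ((y, x) : VertE d V N × VertE d V N) then -(δ * αe (x, y)) else 0))))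
        = edgeCost S αe Jb + δ * edgeCost S αe J - 2 * δ * αe (x, y) := by
      have e1 : (∑' f : {e // e ∈ S},
          (αe f.1 * |Jb f.1| + δ * (αe f.1 * |J f.1|)
            + ((if f.1 = ((x, y) : VertE d V N × VertE d V N) then -(δ * αe (x, y)) else 0)
              + (if f.1 = ((y, x) : VertE d V N × VertE d V N) then -(δ * αe (x, y)) else 0))))
          = (∑' f : {e // e ∈ S}, (αe f.1 * |Jb f.1| + δ * (αe f.1 * |J f.1|)))
            + (∑' f : {e // e ∈ S},
              ((if f.1 = ((x, y) : VertE d V N × VertE d V N) then -(δ * αe (x, y)) else 0)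
                + (if f.1 = ((y, x) : VertE d V N × VertE d V N) then -(δ * αe (x, y)) else 0))) :=
        Summable.tsum_add Summable.of_finite Summable.of_finite
      have e2 : (∑' f : {e // e ∈ S}, (αe f.1 * |Jb f.1| + δ * (αe f.1 * |J f.1|)))
          = (∑' f : {e // e ∈ S}, αe f.1 * |Jb f.1|)
            + (∑' f : {e // e ∈ S}, δ * (αe f.1 * |J f.1|)) :=
        Summable.tsum_add Summable.of_finite Summable.of_finite
      have e3 : (∑' f : {e // e ∈ S}, δ * (αe f.1 * |J f.1|))
          = δ * (∑' f : {e // e ∈ S}, αe f.1 * |J f.1|) := tsum_mul_left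
      have e4 : (∑' f : {e // e ∈ S},
          ((if f.1 = ((x, y) : VertE d V N × VertE d V N) then -(δ * αe (x, y)) else 0)
            + (if f.1 = ((y, x) : VertE d V N × VertE d V N) then -(δ * αe (x, y)) else 0)))
          = (∑' f : {e // e ∈ S},
              (if f.1 = ((x, y) : VertE d V N × VertE d V N) then -(δ * αe (x, y)) else 0))
            + (∑' f : {e // e ∈ S},
              (if f.1 = ((y, x) : VertE d V N × VertE d V N) then -(δ * αe (x, y)) else 0)) :=
        Summable.tsum_add Summable.of_finite Summable.of_finite
      rw [e1, e2, e3, e4, tsum_ite_subtype' (x, y) he (-(δ * αe (x, y))),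
        tsum_ite_subtype' (y, x) (hSsymm x y he) (-(δ * αe (x, y)))]
      show (∑' f : {e // e ∈ S}, αe f.1 * |Jb f.1|)
          + δ * (∑' f : {e // e ∈ S}, αe f.1 * |J f.1|)
          + (-(δ * αe (x, y)) + -(δ * αe (x, y)))
        = edgeCost S αe Jb + δ * edgeCost S αe J - 2 * δ * αe (x, y)
      unfold edgeCost
      ring
    have hcmp := hmin Jb' hA' hS' hd'
    rw [hsplit] at hsum
    nlinarith [hδ, hcmp, hsum]
  -- conclusion
  show dEps S αe x y = ((2 * αe (x, y) : ℝ) : EReal)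
  unfold dEps
  refine le_antisymm (sInf_le ⟨J0, hJ0A, hJ0S, hJ0div, by rw [hcost0]⟩) ?_
  apply le_sInf
  rintro A ⟨J, hJA, hJS, hJd, rfl⟩
  exact EReal.coe_le_coe_iff.mpr (hlow J hJA hJS hJd)
end
end

section
/- (Lower bound for the rescaled energy) Let (𝒳,ℰ) be a ℤ^d-periodic graph and let F : ℝ₊^𝒳 × ℝ_a^ℰ → ℝ ∪ {+∞} satisfy the growth condition F(m,J) ≥ c Σ_{(x,y)∈ℰ^Q} |J(x,y)| − C(1 + Σ_{x: |x_z|_∞ ≤ R} m(x)) for some c > 0, C < ∞ and R ≥ R₀. Then for every ε = 1/n with εR₀ < 1/2 and every m ∈ ℝ₊^{𝒳_ε}, J ∈ ℝ_a^{ℰ_ε}, the rescaled energy satisfies F_ε(m,J) ≥ −C(1 + (2R+1)^d Σ_{x∈𝒳_ε} m(x)); in particular F_ε(m,J) is well-defined in ℝ ∪ {+∞}. -/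
open scoped BigOperators ENNReal
open MeasureTheory Filter Set Topology

noncomputable section

open PeriodicTransport MeasureTheory Filter Set

/-- **Lower bound for the rescaled energy** (Remark 2.8 of the paper).
If `F` satisfies the at-least-linear growth condition with constants `c > 0`, `C` and
radius `R ≥ R₀`, then for every `ε = 1/N` with `εR₀ < 1/2` the rescaled energy
satisfies `F_ε(m,J) ≥ -C(1 + (2R+1)^d Σ_x m(x))`; in particular it is well-defined in
`ℝ ∪ {+∞}`. -/
theorem Feps_lower_bound
    (d : ℕ) (V : Type) [Fintype V] [DecidableEq V]
    (G : PeriodicGraph d V)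
    (F : (Vert d V → ℝ) → (Vert d V × Vert d V → ℝ) → EReal)
    (c C : ℝ) (hc : 0 < c)
    (R₀ R : ℤ) (hedge : ∀ e ∈ G.E, ∀ i, |e.1.1 i - e.2.1 i| ≤ R₀) (hRR₀ : R₀ ≤ R)
    (hgrowth : ∀ m J, (∀ x, 0 ≤ m x) → IsAntisym J →
      ((c * (∑' e : EQ G, |J e.1|)
          - C * (1 + ∑' x : ballV d V (R : ℝ), m x.1) : ℝ) : EReal) ≤ F m J)
    (N : ℕ) [NeZero N] (hN : 2 * R₀ < (N : ℤ))
    (m : VertE d V N → ℝ) (hm : ∀ x, 0 ≤ m x)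
    (J : VertE d V N × VertE d V N → ℝ) (hJ : IsAntisym J) :
    ((-(C * (1 + (2 * (R : ℝ) + 1) ^ d * ∑ x : VertE d V N, m x)) : ℝ) : EReal)
      ≤ Feps N F m J := by
  
  classical
  have hN0 : (0:ℝ) < (N:ℝ) := by exact_mod_cast Nat.pos_of_ne_zero (NeZero.ne N)
  have hNpos : (0:ℝ) < (N:ℝ)^d := by positivity
  have hNne : ((N : ℝ) ^ d) ≠ 0 := ne_of_gt hNpos
  set ε : ℝ := ((N : ℝ) ^ d)⁻¹ with hε
  have hεnn : (0:ℝ) ≤ ε := by rw [hε]; positivity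
  have hεN : ε * (N:ℝ)^d = 1 := inv_mul_cancel₀ hNne
  set M : ℝ := ∑ x : VertE d V N, m x with hMdef
  set Bfin : Finset (Fin d → ℤ) := Fintype.piFinset fun _ : Fin d => Finset.Icc (-R) R
    with hBfin
  set Pfin : Finset (Vert d V) := Bfin ×ˢ (Finset.univ : Finset V) with hPfin
  have hball : ballV d V (R : ℝ) = (Pfin : Set (Vert d V)) := by
    ext x
    simp only [ballV, Set.mem_setOf_eq, hPfin, Finset.mem_coe, Finset.mem_product,
      Fintype.mem_piFinset, Finset.mem_Icc, Finset.mem_univ, and_true, hBfin]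
    constructor
    · intro h i
      have h' : |x.1 i| ≤ R := by
        have := h i
        rwa [← Int.cast_abs, Int.cast_le] at this
      exact abs_le.mp h'
    · intro h i
      have h' : |x.1 i| ≤ R := abs_le.mpr (h i)
      rw [← Int.cast_abs, Int.cast_le]
      exact h'
  set Tz : (Fin d → ZMod N) → ℝ := fun z => ∑ p ∈ Pfin, (N:ℝ)^d * tauV N z m p with hTz
  set Sz : (Fin d → ZMod N) → ℝ :=
    fun z => ∑' e : EQ G, |(N:ℝ)^(d-1) * tauE N z J e.1| with hSz
  -- per-term bound
  have key : ∀ z : Fin d → ZMod N,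
      ((ε * (c * Sz z - C * (1 + Tz z)) : ℝ) : EReal)
        ≤ (ε : EReal) * F (fun x => (N:ℝ)^d * tauV N z m x)
            (fun e => (N:ℝ)^(d-1) * tauE N z J e) := by
    intro z
    have hmz : ∀ x, 0 ≤ (N:ℝ)^d * tauV N z m x :=
      fun x => mul_nonneg hNpos.le (hm _)
    have hJz : IsAntisym (fun e : Vert d V × Vert d V => (N:ℝ)^(d-1) * tauE N z J e) := by
      intro a b
      have h := hJ ((fun i => z i + ((a.1 i : ℤ) : ZMod N)), a.2)
        ((fun i => z i + ((b.1 i : ℤ) : ZMod N)), b.2)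
      simp only [tauE]
      rw [h]; ring
    have h1 := hgrowth _ _ hmz hJz
    have h2 : (∑' x : ballV d V (R:ℝ), (N:ℝ)^d * tauV N z m x.1) = Tz z := by
      rw [hball]
      exact Finset.tsum_subtype' Pfin (fun p => (N:ℝ)^d * tauV N z m p)
    rw [h2] at h1
    rw [EReal.coe_mul]
    exact mul_le_mul_of_nonneg_left h1 (by exact_mod_cast hεnn)
  -- sum of z-count
  have hzcard : ((Fintype.card (Fin d → ZMod N) : ℕ) : ℝ) = (N:ℝ)^d := by
    rw [Fintype.card_fun, ZMod.card, Fintype.card_fin]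
    push_cast
    ring
  -- the key sum identity
  have hTsum : (∑ z : Fin d → ZMod N, Tz z) = (N:ℝ)^d * ((Bfin.card : ℝ) * M) := by
    rw [hTz]
    rw [Finset.sum_comm]
    have hinner : ∀ p ∈ Pfin,
        (∑ z : Fin d → ZMod N, (N:ℝ)^d * tauV N z m p)
          = (N:ℝ)^d * ∑ w : Fin d → ZMod N, m (w, p.2) := by
      intro p _
      rw [← Finset.mul_sum]
      congr 1
      exact Fintype.sum_equiv (Equiv.addRight (fun i => ((p.1 i : ℤ) : ZMod N)))
        _ _ (fun z => rfl)
    rw [Finset.sum_congr rfl hinner, ← Finset.mul_sum]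
    congr 1
    rw [hPfin, Finset.sum_product]
    have : ∀ j ∈ Bfin, (∑ v : V, ∑ w : Fin d → ZMod N, m (w, ((j, v) : Vert d V).2))
        = ∑ v : V, ∑ w : Fin d → ZMod N, m (w, v) := fun j _ => rfl
    rw [Finset.sum_congr rfl this, Finset.sum_const, nsmul_eq_mul]
    congr 1
    rw [hMdef, Fintype.sum_prod_type]
    exact Finset.sum_comm
  -- the cardinality identity
  have hcard : ((Bfin.card : ℕ) : ℝ) * M = (2*(R:ℝ)+1)^d * M := by
    rcases Nat.eq_zero_or_pos d with hd | hd
    · subst hd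
      simp [hBfin]
    rcases isEmpty_or_nonempty V with hV | hV
    · have hM0 : M = 0 := by
        rw [hMdef]
        simp [Finset.univ_eq_empty]
      rw [hM0]; ring
    · obtain ⟨v⟩ := hV
      have hR0 : (0:ℤ) ≤ R₀ := by
        have hne : (((fun _ : Fin d => (0:ℤ)), v) : Vert d V) ≠ ((fun _ => (1:ℤ)), v) := by
          intro h
          have := congrFun (congrArg Prod.fst h) ⟨0, hd⟩
          simp at this
        rcases (G.conn ((fun _ => 0), v) ((fun _ => 1), v)).cases_head with h | ⟨b, hb, -⟩
        · exact absurd h hne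
        · exact le_trans (abs_nonneg _) (hedge _ hb ⟨0, hd⟩)
      have hR : (0:ℤ) ≤ R := le_trans hR0 hRR₀
      have hcB : ((Bfin.card : ℕ) : ℝ) = (2*(R:ℝ)+1)^d := by
        rw [hBfin, Fintype.card_piFinset]
        simp only [Int.card_Icc]
        rw [Finset.prod_const, Finset.card_univ, Fintype.card_fin]
        have h2R : (0:ℤ) ≤ R + 1 - -R := by linarith
        have hval : (((R + 1 - -R).toNat : ℕ) : ℝ) = 2*(R:ℝ)+1 := by
          have h := Int.toNat_of_nonneg h2R
          have h' : (((R + 1 - -R).toNat : ℕ) : ℝ) = ((R + 1 - -R : ℤ) : ℝ) := by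
            exact_mod_cast congrArg (fun t : ℤ => (t : ℝ)) h
          rw [h']; push_cast; ring
        rw [Nat.cast_pow, hval]
      rw [hcB]
  -- the real-valued inequality
  have hreal : -(C * (1 + (2 * (R : ℝ) + 1) ^ d * M))
      ≤ ∑ z : Fin d → ZMod N, ε * (c * Sz z - C * (1 + Tz z)) := by
    have hstep : ∀ z : Fin d → ZMod N,
        ε * (-(C * (1 + Tz z))) ≤ ε * (c * Sz z - C * (1 + Tz z)) := by
      intro z
      have hS : 0 ≤ Sz z := tsum_nonneg (fun e => abs_nonneg _)
      apply mul_le_mul_of_nonneg_left _ hεnn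
      nlinarith
    refine le_trans (le_of_eq ?_) (Finset.sum_le_sum (fun z _ => hstep z))
    have expand : ∀ z : Fin d → ZMod N,
        ε * (-(C * (1 + Tz z))) = -(ε*C) + (-(ε*C)) * Tz z := fun z => by ring
    rw [Finset.sum_congr rfl (fun z _ => expand z), Finset.sum_add_distrib,
      Finset.sum_const, ← Finset.mul_sum, hTsum, Finset.card_univ, nsmul_eq_mul, hzcard]
    rw [← hcard]
    linear_combination (C + C * (((Bfin.card : ℕ):ℝ) * M)) * hεN
  -- assemble in EReal
  have hcoe : ((∑ z : Fin d → ZMod N, ε * (c * Sz z - C * (1 + Tz z)) : ℝ) : EReal)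
      = ∑ z : Fin d → ZMod N, ((ε * (c * Sz z - C * (1 + Tz z)) : ℝ) : EReal) :=
    map_sum (⟨⟨Real.toEReal, EReal.coe_zero⟩, EReal.coe_add⟩ : ℝ →+ EReal) _ _
  calc ((-(C * (1 + (2 * (R : ℝ) + 1) ^ d * M)) : ℝ) : EReal)
      ≤ ((∑ z : Fin d → ZMod N, ε * (c * Sz z - C * (1 + Tz z)) : ℝ) : EReal) :=
        EReal.coe_le_coe_iff.mpr hreal
    _ = ∑ z : Fin d → ZMod N, ((ε * (c * Sz z - C * (1 + Tz z)) : ℝ) : EReal) := hcoe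
    _ ≤ ∑ z : Fin d → ZMod N, (ε : EReal) * F (fun x => (N:ℝ)^d * tauV N z m x)
          (fun e => (N:ℝ)^(d-1) * tauE N z J e) :=
        Finset.sum_le_sum (fun z _ => key z)
    _ = Feps N F m J := rfl
end
end
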